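/- For every m ≥ 3 there exists a finite BCK-algebra X which is m-commutative (for all a, b ∈ X with b ≤ a the sequence z_0 = a, z_1 = b, z_k = z_{k-2}·(z_{k-2}·z_{k-1}) satisfies z_m = z_{m+1}, and m is minimal with this property) but which contains elements x, y whose BCK-sequences satisfy x_m ≠ y_m. Consequently, the variety V_m of m-commutative BCK-algebras is not characterized by the identity x_m = y_m. -/

import Mathlib

/-- A BCK-algebra structure on a set `X`: a binary operation `op` and a
constant `zero` satisfying the five BCK axioms. -/
structure BCK (X : Type*) where
  op : X → X → X
  zero : X
  ax1 : ∀ x y z : X, op (op (op x y) (op z y)) (op x z) = zero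
  ax2 : ∀ x y : X, op (op x (op x y)) y = zero
  ax3 : ∀ x : X, op x zero = x
  ax4 : ∀ x : X, op zero x = zero
  ax5 : ∀ x y : X, op x y = zero → op y x = zero → x = y

/-- The sequence `z_0 = a`, `z_1 = b`, `z_k = z_{k-2}·(z_{k-2}·z_{k-1})`
for `k ≥ 2`. -/
def zseq {X : Type*} (op : X → X → X) (a b : X) : ℕ → X
  | 0 => a
  | 1 => b
  | k + 2 => op (zseq op a b k) (op (zseq op a b k) (zseq op a b (k + 1)))

/-- The pair of BCK-sequences `(x_k, y_k)` determined by starting elements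
`x, y`:  `x_0 = x`, `y_0 = y`, `x_1 = y·(y·x)`, `y_1 = x·(x·y)`, and
`x_k = x_{k-2}·(x_{k-2}·x_{k-1})`, `y_k = y_{k-2}·(y_{k-2}·y_{k-1})` for `k ≥ 2`. -/
def bckPair {X : Type*} (op : X → X → X) (x y : X) : ℕ → X × X
  | 0 => (x, y)
  | 1 => (op y (op y x), op x (op x y))
  | k + 2 =>
      (op (bckPair op x y k).1 (op (bckPair op x y k).1 (bckPair op x y (k + 1)).1),
       op (bckPair op x y k).2 (op (bckPair op x y k).2 (bckPair op x y (k + 1)).2))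


/-!
Take the product of the chain `{0, …, m+1}`, with `i·j = max (i-j-1) 1` for `0 < j < i`, and a
six-element 3-commutative BCK-algebra. In the chain, the sequence started at `(b+1, b)` is
`b+1, b, b-1, …, 2, 1, 1, …`, so the pair `(m+1, m)` needs exactly `m` steps to stabilise and the
chain is `m`-commutative. In the six-element algebra the BCK-sequences of `1` and `2` end in the
distinct values `5` and `0`. Sequences in a product are computed componentwise, so the product
inherits the commutativity degree of the chain and the distinct sequences of the second factor.
-/

section Maps

variable {X Y : Type*} {opX : X → X → X} {opY : Y → Y → Y}

theorem map_zseq (f : X → Y) (hf : ∀ x y, f (opX x y) = opY (f x) (f y)) (a b : X) :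
    ∀ k, f (zseq opX a b k) = zseq opY (f a) (f b) k
  | 0 => rfl
  | 1 => rfl
  | k + 2 => by simp only [zseq, hf, map_zseq f hf a b k, map_zseq f hf a b (k + 1)]

theorem bckPair_eq_zseq (op : X → X → X) (x y : X) :
    ∀ k, bckPair op x y k =
      zseq (fun p q => (op p.1 q.1, op p.2 q.2)) (x, y) (op y (op y x), op x (op x y)) k
  | 0 => rfl
  | 1 => rfl
  | k + 2 => by rw [bckPair, zseq, bckPair_eq_zseq op x y k, bckPair_eq_zseq op x y (k + 1)]

theorem map_bckPair (f : X → Y) (hf : ∀ x y, f (opX x y) = opY (f x) (f y)) (x y : X) (k : ℕ) :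
    Prod.map f f (bckPair opX x y k) = bckPair opY (f x) (f y) k := by
  rw [bckPair_eq_zseq, bckPair_eq_zseq, map_zseq (opY := fun p q => (opY p.1 q.1, opY p.2 q.2))
    (Prod.map f f) (fun _ _ => by simp [hf])]
  simp [hf]

end Maps

namespace BCK

variable {X Y : Type*}

/-- The paper's `m`-commutativity is `StabilizesAt m` together with minimality of `m`. -/
def StabilizesAt (A : BCK X) (n : ℕ) : Prop :=
  ∀ a b : X, A.op b a = A.zero → zseq A.op a b n = zseq A.op a b (n + 1)

theorem op_self (A : BCK X) (x : X) : A.op x x = A.zero := by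
  simpa only [A.ax3] using A.ax2 x A.zero

theorem op_op_self (A : BCK X) (x : X) : A.op x (A.op x x) = x := by
  rw [A.op_self, A.ax3]

theorem zseq_eq_of_le (A : BCK X) {a b : X} {k l : ℕ} (hkl : k ≤ l)
    (h : zseq A.op a b k = zseq A.op a b (k + 1)) : zseq A.op a b l = zseq A.op a b k := by
  suffices zseq A.op a b l = zseq A.op a b k ∧ zseq A.op a b (l + 1) = zseq A.op a b k from this.1
  induction l, hkl using Nat.le_induction with
  | base => exact ⟨rfl, h.symm⟩
  | succ l _ ih => exact ⟨ih.2, by rw [zseq, ih.1, ih.2, A.op_op_self]⟩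

theorem StabilizesAt.mono {A : BCK X} {k l : ℕ} (h : A.StabilizesAt k) (hkl : k ≤ l) :
    A.StabilizesAt l := fun a b hba => by
  rw [A.zseq_eq_of_le hkl (h a b hba), A.zseq_eq_of_le (hkl.trans l.le_succ) (h a b hba)]

def comap (A : BCK Y) (f : X → Y) (hf : Function.Injective f) (op : X → X → X) (zero : X)
    (hop : ∀ x y, f (op x y) = A.op (f x) (f y)) (hzero : f zero = A.zero) : BCK X where
  op := op
  zero := zero
  ax1 x y z := hf (by simp only [hop, hzero, A.ax1])
  ax2 x y := hf (by simp only [hop, hzero, A.ax2])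
  ax3 x := hf (by simp only [hop, hzero, A.ax3])
  ax4 x := hf (by simp only [hop, hzero, A.ax4])
  ax5 x y hxy hyx := hf (A.ax5 _ _ (by rw [← hop, hxy, hzero]) (by rw [← hop, hyx, hzero]))

protected def prod (A : BCK X) (B : BCK Y) : BCK (X × Y) where
  op p q := (A.op p.1 q.1, B.op p.2 q.2)
  zero := (A.zero, B.zero)
  ax1 _ _ _ := Prod.ext (A.ax1 _ _ _) (B.ax1 _ _ _)
  ax2 _ _ := Prod.ext (A.ax2 _ _) (B.ax2 _ _)
  ax3 _ := Prod.ext (A.ax3 _) (B.ax3 _)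
  ax4 _ := Prod.ext (A.ax4 _) (B.ax4 _)
  ax5 _ _ hxy hyx := Prod.ext (A.ax5 _ _ congr($hxy.1) congr($hyx.1))
    (B.ax5 _ _ congr($hxy.2) congr($hyx.2))

theorem zseq_prod (A : BCK X) (B : BCK Y) (a b : X × Y) (k : ℕ) :
    zseq (A.prod B).op a b k = (zseq A.op a.1 b.1 k, zseq B.op a.2 b.2 k) :=
  Prod.ext (map_zseq Prod.fst (fun _ _ => rfl) a b k) (map_zseq Prod.snd (fun _ _ => rfl) a b k)

theorem stabilizesAt_prod {A : BCK X} {B : BCK Y} {n : ℕ} :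
    (A.prod B).StabilizesAt n ↔ A.StabilizesAt n ∧ B.StabilizesAt n := by
  refine ⟨fun h => ⟨fun a b hba => ?_, fun a b hba => ?_⟩, fun ⟨hA, hB⟩ a b hba => ?_⟩
  · have := h (a, B.zero) (b, B.zero) (Prod.ext hba (B.op_self _))
    simpa only [zseq_prod] using congr($this.1)
  · have := h (A.zero, a) (A.zero, b) (Prod.ext (A.op_self _) hba)
    simpa only [zseq_prod] using congr($this.2)
  · rw [zseq_prod, zseq_prod, hA a.1 b.1 congr($hba.1), hB a.2 b.2 congr($hba.2)]

end BCK

def chainOp (i j : ℕ) : ℕ :=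
  if i ≤ j then 0 else if j = 0 then i else if j + 2 ≤ i then i - j - 1 else 1

theorem chainOp_cases (i j : ℕ) :
    (i ≤ j ∧ chainOp i j = 0) ∨ (j < i ∧ j = 0 ∧ chainOp i j = i) ∨
    (j < i ∧ 1 ≤ j ∧ j + 2 ≤ i ∧ chainOp i j = i - j - 1) ∨
    (j < i ∧ 1 ≤ j ∧ i < j + 2 ∧ chainOp i j = 1) := by
  unfold chainOp; split_ifs <;> omega

theorem chainOp_le (i j : ℕ) : chainOp i j ≤ i := by
  have := chainOp_cases i j; omega

theorem chainOp_eq_zero {i j : ℕ} : chainOp i j = 0 ↔ i ≤ j := by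
  have := chainOp_cases i j; omega

theorem chainOp_ax1 (x y z : ℕ) :
    chainOp (chainOp (chainOp x y) (chainOp z y)) (chainOp x z) = 0 := by
  have := chainOp_cases x y
  have := chainOp_cases z y
  have := chainOp_cases (chainOp x y) (chainOp z y)
  have := chainOp_cases x z
  have := chainOp_cases (chainOp (chainOp x y) (chainOp z y)) (chainOp x z)
  omega

def natChain : BCK ℕ where
  op := chainOp
  zero := 0
  ax1 := chainOp_ax1
  ax2 x y := by
    have := chainOp_cases x y
    have := chainOp_cases x (chainOp x y)
    have := chainOp_cases (chainOp x (chainOp x y)) y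
    omega
  ax3 x := by have := chainOp_cases x 0; omega
  ax4 x := by have := chainOp_cases 0 x; omega
  ax5 x y hxy hyx := by rw [chainOp_eq_zero] at hxy hyx; omega

theorem chainOp_chainOp_of_ne_succ {a b : ℕ} (hba : b ≤ a) (h : a = b + 1 → b = 0) :
    chainOp a (chainOp a b) = b := by
  have := chainOp_cases a b
  have := chainOp_cases a (chainOp a b)
  omega

theorem chainOp_max_descend (u : ℕ) :
    chainOp (max u 1) (chainOp (max u 1) (max (u - 1) 1)) = max (u - 2) 1 := by
  have := chainOp_cases (max u 1) (max (u - 1) 1)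
  have := chainOp_cases (max u 1) (chainOp (max u 1) (max (u - 1) 1))
  omega

theorem zseq_chainOp_succ_self {b : ℕ} (hb : 1 ≤ b) (j : ℕ) :
    zseq chainOp (b + 1) b j = max (b + 1 - j) 1 := by
  suffices zseq chainOp (b + 1) b j = max (b + 1 - j) 1 ∧
      zseq chainOp (b + 1) b (j + 1) = max (b + 1 - (j + 1)) 1 from this.1
  induction j with
  | zero => constructor <;> simp only [zseq] <;> omega
  | succ j ih =>
    refine ⟨ih.2, ?_⟩
    rw [zseq, ih.1, ih.2, show b + 1 - (j + 1) = b + 1 - j - 1 by omega,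
      chainOp_max_descend, show b + 1 - j - 2 = b + 1 - (j + 1 + 1) by omega]

theorem zseq_chainOp_stable {a b j : ℕ} (hba : b ≤ a) (hj : 1 ≤ j) (ha : a ≤ j + 1) :
    zseq chainOp a b j = zseq chainOp a b (j + 1) := by
  by_cases h : a = b + 1 ∧ 1 ≤ b
  · obtain ⟨rfl, hb⟩ := h
    rw [zseq_chainOp_succ_self hb, zseq_chainOp_succ_self hb]
    omega
  · -- every other sequence is constant from `z_1` on
    have h12 : zseq chainOp a b 1 = zseq chainOp a b 2 :=
      (chainOp_chainOp_of_ne_succ hba (by omega)).symm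
    exact (natChain.zseq_eq_of_le hj h12).trans (natChain.zseq_eq_of_le (by omega) h12).symm

def chain (n : ℕ) : BCK (Fin (n + 1)) :=
  natChain.comap Fin.val Fin.val_injective
    (fun i j => ⟨chainOp i j, (chainOp_le _ _).trans_lt i.isLt⟩) 0 (fun _ _ => rfl) rfl

theorem val_zseq_chain (n : ℕ) (a b : Fin (n + 1)) (k : ℕ) :
    (zseq (chain n).op a b k).val = zseq chainOp a b k :=
  map_zseq (opX := (chain n).op) (opY := chainOp) Fin.val (fun _ _ => rfl) a b k

theorem chain_stabilizesAt {n j : ℕ} (hj : 1 ≤ j) (hn : n ≤ j + 1) : (chain n).StabilizesAt j :=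
  fun a b hba => Fin.val_injective <| by
    rw [val_zseq_chain, val_zseq_chain]
    exact zseq_chainOp_stable (chainOp_eq_zero.1 (congrArg Fin.val hba)) hj (by omega)

theorem chain_not_stabilizesAt {n j : ℕ} (hj : j + 2 ≤ n) : ¬ (chain n).StabilizesAt j := by
  obtain ⟨b, rfl⟩ : ∃ b, n = b + 1 := ⟨n - 1, by omega⟩
  intro h
  have hval := congr(($(h ⟨b + 1, by omega⟩ ⟨b, by omega⟩
    (Fin.ext (chainOp_eq_zero.2 b.le_succ))) : ℕ))
  rw [val_zseq_chain, val_zseq_chain, zseq_chainOp_succ_self (by omega),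
    zseq_chainOp_succ_self (by omega)] at hval
  omega

def sixElementBCK : BCK (Fin 6) where
  op := ![![0, 0, 0, 0, 0, 0], ![1, 0, 5, 5, 5, 4], ![2, 3, 0, 5, 3, 3],
    ![3, 3, 0, 0, 3, 3], ![4, 0, 0, 0, 0, 4], ![5, 0, 0, 0, 0, 0]]
  zero := 0
  ax1 := by decide
  ax2 := by decide
  ax3 := by decide
  ax4 := by decide
  ax5 := by decide

theorem sixElementBCK_stabilizesAt_three : sixElementBCK.StabilizesAt 3 := by
  unfold BCK.StabilizesAt; decide

theorem sixElementBCK_bckPair_one_two {k : ℕ} (hk : 3 ≤ k) :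
    bckPair sixElementBCK.op 1 2 k = (5, 0) := by
  rw [bckPair_eq_zseq]
  exact ((sixElementBCK.prod sixElementBCK).zseq_eq_of_le hk (by decide)).trans (by decide)

/-- For every `m ≥ 3` there exists a finite BCK-algebra `X` which is
`m`-commutative (for all `a, b ∈ X` with `b ≤ a` in the BCK-order, the
sequence `z_0 = a`, `z_1 = b`, `z_k = z_{k-2}·(z_{k-2}·z_{k-1})` satisfies
`z_m = z_{m+1}`, and `m` is minimal with this property) but which contains
elements `x, y` whose BCK-sequences satisfy `x_m ≠ y_m`.  Consequently, the
variety `V_m` of `m`-commutative BCK-algebras is not characterized by the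
identity `x_m = y_m`. -/
theorem Vm_not_characterized_by_identity (m : ℕ) (hm : 3 ≤ m) :
    ∃ (X : Type) (_ : Fintype X) (A : BCK X),
      (∀ a b : X, A.op b a = A.zero → zseq A.op a b m = zseq A.op a b (m + 1)) ∧
      (∀ m' : ℕ, m' < m →
        ¬ (∀ a b : X, A.op b a = A.zero →
            zseq A.op a b m' = zseq A.op a b (m' + 1))) ∧
      (∃ x y : X, (bckPair A.op x y m).1 ≠ (bckPair A.op x y m).2) := by
  set A := (chain (m + 1)).prod sixElementBCK
  refine ⟨Fin (m + 2) × Fin 6, inferInstance, A, ?_, ?_, ?_⟩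
  · exact BCK.stabilizesAt_prod.2
      ⟨chain_stabilizesAt (by omega) le_rfl, sixElementBCK_stabilizesAt_three.mono hm⟩
  · intro m' hm' h
    have hpred : A.StabilizesAt (m - 1) := BCK.StabilizesAt.mono h (by omega)
    exact chain_not_stabilizesAt (by omega) (BCK.stabilizesAt_prod.1 hpred).1
  · refine ⟨(0, 1), (0, 2), fun h => ?_⟩
    have hsnd := map_bckPair (opX := A.op) (opY := sixElementBCK.op) Prod.snd
      (fun _ _ => rfl) (0, 1) (0, 2) m
    rw [sixElementBCK_bckPair_one_two hm, Prod.map, h, Prod.mk.injEq] at hsnd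
    exact absurd (hsnd.1.symm.trans hsnd.2) (by decide)
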